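/- Let Γ be a totally ordered abelian group. Then there is a canonical isomorphism of fuzzy rings 𝓕̄(H_Γ) ≅ K_Γ: the set S(H_Γ) of finite hypersums in H_Γ consists exactly of the singletons {a} and the intervals [0,a] in Γ ∪ {0}, and under this identification the addition, multiplication, distinguished element ε, and sets of null elements of 𝓕̄(H_Γ) and of K_Γ coincide. -/

import Mathlib

open Set

/-! ### Set-level operations induced by a hyperoperation -/

/-- The sum of two subsets with respect to a hyperaddition. -/
def sAddOf {R : Type*} (add : R → R → Set R) (X Y : Set R) : Set R :=
  ⋃ x ∈ X, ⋃ y ∈ Y, add x y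

/-- The hypersum of a list of elements (padded with a final `zero`). -/
def hypersum {R : Type*} (add : R → R → Set R) (zero : R) (l : List R) : Set R :=
  l.foldr (fun a X => sAddOf add {a} X) {zero}

/-- The collection of all finite (nonempty) hypersums of elements. -/
def sumSet {R : Type*} (add : R → R → Set R) : Set (Set R) :=
  {A | ∃ (a : R) (l : List R), A = l.foldr (fun x X => sAddOf add {x} X) ({a} : Set R)}

/-- The nonempty subsets of a type. -/
abbrev NSet (R : Type*) := {A : Set R // A.Nonempty}

/-- Image of a nonempty subset under a map. -/
def NSet.map {R S : Type*} (f : R → S) (A : NSet R) : NSet S := ⟨f '' A.1, A.2.image f⟩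

/-- Elementwise product of nonempty subsets. -/
def nsMul {R : Type*} (mul : R → R → R) (A B : NSet R) : NSet R :=
  ⟨Set.image2 mul A.1 B.1, A.2.image2 B.2⟩

/-! ### Hyperrings and hyperfields -/

/-- The data `(add, mul, zero, one)` forms a hyperring: `(R, add)` is a canonical
hypergroup, `(R, mul)` is a commutative unital monoid, and multiplication
distributes over hyperaddition with `zero` absorbing. -/
structure IsHyperring {R : Type*} (add : R → R → Set R) (mul : R → R → R)
    (zero one : R) : Prop where
  add_nonempty : ∀ a b, (add a b).Nonempty
  add_comm : ∀ a b, add a b = add b a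
  add_zero : ∀ a, add a zero = {a}
  exists_neg : ∀ a, ∃! b, zero ∈ add a b
  add_assoc : ∀ a b c, sAddOf add (add a b) {c} = sAddOf add {a} (add b c)
  reversible : ∀ a b b' c, zero ∈ add b b' → (a ∈ add b c ↔ c ∈ add a b')
  mul_comm : ∀ a b, mul a b = mul b a
  mul_assoc : ∀ a b c, mul (mul a b) c = mul a (mul b c)
  mul_one : ∀ a, mul a one = a
  mul_zero : ∀ a, mul a zero = zero
  distrib : ∀ a b c, mul a '' add b c = add (mul a b) (mul a c)

/-- The data forms a hyperfield: a hyperring in which every nonzero element is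
a multiplicative unit. -/
structure IsHyperfield {R : Type*} (add : R → R → Set R) (mul : R → R → R)
    (zero one : R) extends IsHyperring add mul zero one : Prop where
  one_ne_zero : one ≠ zero
  inv : ∀ a, a ≠ zero → ∃ b, mul a b = one

/-- A (bundled) hyperring structure on `R`. -/
structure Hyperring (R : Type*) where
  add : R → R → Set R
  mul : R → R → R
  zero : R
  one : R
  isHyperring : IsHyperring add mul zero one

/-- The hyperadditive inverse. -/
noncomputable def Hyperring.neg {R : Type*} (H : Hyperring R) (a : R) : R :=
  (H.isHyperring.exists_neg a).exists.choose

/-- A unit of a hyperring. -/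
def Hyperring.IsUnit {R : Type*} (H : Hyperring R) (a : R) : Prop :=
  ∃ b, H.mul a b = H.one

/-- A (bundled) hyperfield structure on `R`. -/
structure Hyperfield (R : Type*) extends Hyperring R where
  one_ne_zero : one ≠ zero
  inv : ∀ a, a ≠ zero → ∃ b, mul a b = one

/-- A homomorphism of hyperrings (with respect to unbundled data):
`f 0 = 0`, `f 1 = 1`, `f(a+b) ⊆ f a + f b` and `f(a×b) = f a × f b`. -/
structure IsHyperringHom {R S : Type*}
    (addR : R → R → Set R) (mulR : R → R → R) (zeroR oneR : R)
    (addS : S → S → Set S) (mulS : S → S → S) (zeroS oneS : S)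
    (f : R → S) : Prop where
  map_zero : f zeroR = zeroS
  map_one : f oneR = oneS
  map_add : ∀ a b, f '' addR a b ⊆ addS (f a) (f b)
  map_mul : ∀ a b, f (mulR a b) = mulS (f a) (f b)

/-- A strict homomorphism of hyperrings: as above, but `f(a+b) = f a + f b`. -/
structure IsStrictHyperringHom {R S : Type*}
    (addR : R → R → Set R) (mulR : R → R → R) (zeroR oneR : R)
    (addS : S → S → Set S) (mulS : S → S → S) (zeroS oneS : S)
    (f : R → S) : Prop where
  map_zero : f zeroR = zeroS
  map_one : f oneR = oneS
  map_add : ∀ a b, f '' addR a b = addS (f a) (f b)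
  map_mul : ∀ a b, f (mulR a b) = mulS (f a) (f b)

/-! ### Fuzzy rings -/

/-- The data of a fuzzy ring: two binary operations, neutral elements,
a distinguished element `eps` and a set `null` of null elements. -/
structure FuzzyData (K : Type*) where
  add : K → K → K
  mul : K → K → K
  zero : K
  one : K
  eps : K
  null : Set K

namespace FuzzyData

/-- Multiplicative units. -/
def IsUnit {K : Type*} (D : FuzzyData K) (a : K) : Prop := ∃ b, D.mul a b = D.one

/-- Sum of a list of elements. -/
def sum {K : Type*} (D : FuzzyData K) (l : List K) : K := l.foldr D.add D.zero

/-- A fuzzy ring is field-like if for each pair of units `a, b` there exists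
`c ∈ K^× ∪ {0}` with `a + b + c` null. -/
def FieldLike {K : Type*} (D : FuzzyData K) : Prop :=
  ∀ a b, D.IsUnit a → D.IsUnit b →
    ∃ c, (D.IsUnit c ∨ c = D.zero) ∧ D.add (D.add a b) c ∈ D.null

end FuzzyData

/-- Dress's fuzzy ring axioms (FR0)–(FR7). -/
structure IsFuzzyRing {K : Type*} (D : FuzzyData K) : Prop where
  add_comm : ∀ a b, D.add a b = D.add b a
  add_assoc : ∀ a b c, D.add (D.add a b) c = D.add a (D.add b c)
  add_zero : ∀ a, D.add a D.zero = a
  mul_comm : ∀ a b, D.mul a b = D.mul b a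
  mul_assoc : ∀ a b c, D.mul (D.mul a b) c = D.mul a (D.mul b c)
  mul_one : ∀ a, D.mul a D.one = a
  zero_mul : ∀ a, D.mul D.zero a = D.zero
  unit_distrib : ∀ a b c, D.IsUnit a → D.mul a (D.add b c) = D.add (D.mul a b) (D.mul a c)
  eps_sq : D.mul D.eps D.eps = D.one
  null_add : ∀ a ∈ D.null, ∀ b ∈ D.null, D.add a b ∈ D.null
  mul_null : ∀ (a : K), ∀ b ∈ D.null, D.mul a b ∈ D.null
  zero_mem_null : D.zero ∈ D.null
  one_not_mem_null : D.one ∉ D.null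
  fr5 : ∀ a, D.IsUnit a → (D.add D.one a ∈ D.null ↔ a = D.eps)
  fr6 : ∀ a b c d, D.add a b ∈ D.null → D.add c d ∈ D.null →
    D.add (D.mul a c) (D.mul D.eps (D.mul b d)) ∈ D.null
  fr7 : ∀ a b c d, D.add a (D.mul b (D.add c d)) ∈ D.null →
    D.add (D.add a (D.mul b c)) (D.mul b d) ∈ D.null

/-- A weak morphism of fuzzy rings: a map inducing a group homomorphism on units
which preserves null sums of units. -/
structure IsWeakMorphism {K L : Type*} (D : FuzzyData K) (E : FuzzyData L)
    (f : K → L) : Prop where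
  map_unit : ∀ a, D.IsUnit a → E.IsUnit (f a)
  map_one : f D.one = E.one
  map_mul : ∀ a b, D.IsUnit a → D.IsUnit b → f (D.mul a b) = E.mul (f a) (f b)
  map_null : ∀ l : List K, (∀ a ∈ l, D.IsUnit a) →
    D.sum l ∈ D.null → E.sum (l.map f) ∈ E.null

/-- A strong morphism of fuzzy rings. -/
structure IsStrongMorphism {K L : Type*} (D : FuzzyData K) (E : FuzzyData L)
    (f : K → L) : Prop where
  map_one : f D.one = E.one
  map_zero : f D.zero = E.zero
  map_mul : ∀ a b, D.IsUnit a → f (D.mul a b) = E.mul (f a) (f b)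
  map_null : ∀ l : List (K × K),
    D.sum (l.map fun p => D.mul p.1 p.2) ∈ D.null →
    E.sum (l.map fun p => E.mul (f p.1) (f p.2)) ∈ E.null

/-! ### The functor 𝓕 from hyperrings to fuzzy rings -/

/-- The fuzzy-ring data `𝓕(R)` associated to a hyperring `R`: the nonempty
subsets of `R` with subset addition and multiplication, `ε = {-1}`, and null
elements the subsets containing `0`. -/
noncomputable def Hyperring.Fuzzy {R : Type*} (H : Hyperring R) : FuzzyData (NSet R) where
  add A B := ⟨sAddOf H.add A.1 B.1, by
    obtain ⟨a, ha⟩ := A.2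
    obtain ⟨b, hb⟩ := B.2
    obtain ⟨c, hc⟩ := H.isHyperring.add_nonempty a b
    exact ⟨c, Set.mem_biUnion ha (Set.mem_biUnion hb hc)⟩⟩
  mul A B := nsMul H.mul A B
  zero := ⟨{H.zero}, Set.singleton_nonempty _⟩
  one := ⟨{H.one}, Set.singleton_nonempty _⟩
  eps := ⟨{H.neg H.one}, Set.singleton_nonempty _⟩
  null := {A | H.zero ∈ A.1}

/-! ### The functor 𝒢 from field-like fuzzy rings to hyperfields -/

/-- The carrier `K^× ∪ {0}` of `𝒢(K)`. -/
def GCarrier {K : Type*} (D : FuzzyData K) := {a : K // D.IsUnit a ∨ a = D.zero}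

/-- The hyperaddition of `𝒢(K)`: `a ⊕ b = {c : a + b + ε c ∈ K₀}`. -/
def Gadd {K : Type*} (D : FuzzyData K) (a b : GCarrier D) : Set (GCarrier D) :=
  {c | D.add (D.add a.1 b.1) (D.mul D.eps c.1) ∈ D.null}

/-- The zero element of `𝒢(K)`. -/
def Gzero {K : Type*} (D : FuzzyData K) : GCarrier D := ⟨D.zero, Or.inr rfl⟩

/-- The one element of `𝒢(K)`. -/
def Gone {K : Type*} {D : FuzzyData K} (h : IsFuzzyRing D) : GCarrier D :=
  ⟨D.one, Or.inl ⟨D.one, h.mul_one D.one⟩⟩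

/-- The multiplication of `𝒢(K)`. -/
def Gmul {K : Type*} {D : FuzzyData K} (h : IsFuzzyRing D) (a b : GCarrier D) :
    GCarrier D :=
  ⟨D.mul a.1 b.1, by
    rcases b.2 with hb | hb
    · rcases a.2 with ha | ha
      · left
        obtain ⟨a', ha'⟩ := ha
        obtain ⟨b', hb'⟩ := hb
        refine ⟨D.mul a' b', ?_⟩
        rw [h.mul_assoc a.1 b.1 (D.mul a' b'), ← h.mul_assoc b.1 a' b',
          h.mul_comm b.1 a', h.mul_assoc a' b.1 b', hb', h.mul_one, ha']
      · right; rw [ha, h.zero_mul]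
    · right; rw [hb, h.mul_comm, h.zero_mul]⟩

open Classical in
/-- The extension of a weak morphism to `𝒢(K) → 𝒢(L)`, sending `0` to `0`. -/
noncomputable def Gmap {K L : Type*} {D : FuzzyData K} {E : FuzzyData L} {f : K → L}
    (hf : IsWeakMorphism D E f) (a : GCarrier D) : GCarrier E :=
  if h : a.1 = D.zero then Gzero E
  else ⟨f a.1, Or.inl (hf.map_unit a.1 (a.2.resolve_right h))⟩

/-- The canonical map `F → 𝒢(𝓕(F))`, `x ↦ {x}`, for a hyperfield `F`. -/
noncomputable def toG {R : Type*} (F : Hyperfield R) (x : R) :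
    GCarrier F.toHyperring.Fuzzy :=
  ⟨⟨{x}, Set.singleton_nonempty x⟩, by
    by_cases hx : x = F.toHyperring.zero
    · exact Or.inr (by subst hx; rfl)
    · obtain ⟨y, hy⟩ := F.inv x hx
      exact Or.inl ⟨⟨{y}, Set.singleton_nonempty y⟩, by
        apply Subtype.ext
        show Set.image2 F.toHyperring.mul {x} {y} = {F.toHyperring.one}
        rw [Set.image2_singleton, hy]⟩⟩

/-! ### Doubly-distributive hyperfields -/

/-- A hyperfield is doubly-distributive if `(a+b)(c+d) = ac + ad + bc + bd`. -/
def Hyperfield.DoublyDistributive {R : Type*} (F : Hyperfield R) : Prop :=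
  ∀ a b c d : R,
    Set.image2 F.mul (F.add a b) (F.add c d) =
      sAddOf F.add (sAddOf F.add (F.add (F.mul a c) (F.mul a d)) {F.mul b c})
        {F.mul b d}

/-! ### The tropical hyperfield of a totally ordered abelian group, and K_Γ -/

/-- The hyperaddition of the hyperfield `H_Γ` on `Γ ∪ {0}`. -/
def tropAdd (Γ : Type*) [CommGroup Γ] [LinearOrder Γ] [IsOrderedMonoid Γ] (x y : WithZero Γ) :
    Set (WithZero Γ) :=
  if x = y then Set.Iic x else {max x y}

/-- The underlying set of the fuzzy ring `K_Γ`: all singletons and all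
intervals `[0, a]` in `Γ ∪ {0}`. -/
def KgSet (Γ : Type*) [CommGroup Γ] [LinearOrder Γ] [IsOrderedMonoid Γ] : Set (Set (WithZero Γ)) :=
  {A | (∃ a : WithZero Γ, A = {a}) ∨ ∃ a : WithZero Γ, A = Set.Iic a}

open Classical in
/-- The casewise addition of `K_Γ`. -/
noncomputable def KgAdd (Γ : Type*) [CommGroup Γ] [LinearOrder Γ] [IsOrderedMonoid Γ]
    (A B : Set (WithZero Γ)) : Set (WithZero Γ) :=
  if h : ∃ a b : WithZero Γ, A = {a} ∧ B = {b} then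
    if h.choose = h.choose_spec.choose then Set.Iic h.choose
    else {max h.choose h.choose_spec.choose}
  else if h : ∃ a b : WithZero Γ, A = {a} ∧ B = Set.Iic b then
    if h.choose ≤ h.choose_spec.choose then Set.Iic h.choose_spec.choose
    else {h.choose}
  else if h : ∃ a b : WithZero Γ, A = Set.Iic a ∧ B = {b} then
    if h.choose_spec.choose ≤ h.choose then Set.Iic h.choose
    else {h.choose_spec.choose}
  else if h : ∃ a b : WithZero Γ, A = Set.Iic a ∧ B = Set.Iic b then
    Set.Iic (max h.choose h.choose_spec.choose)
  else ∅

/-- The carrier of `K_Γ` as a subtype. -/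
def Kg (Γ : Type*) [CommGroup Γ] [LinearOrder Γ] [IsOrderedMonoid Γ] := {A : Set (WithZero Γ) // A ∈ KgSet Γ}

/-- The inclusion `K_Γ → 𝓕(H_Γ)`. -/
noncomputable def KgToF (Γ : Type*) [CommGroup Γ] [LinearOrder Γ] [IsOrderedMonoid Γ] (A : Kg Γ) : NSet (WithZero Γ) :=
  ⟨A.1, by
    rcases A.2 with ⟨a, h⟩ | ⟨a, h⟩
    · rw [h]; exact Set.singleton_nonempty a
    · rw [h]; exact ⟨a, Set.mem_Iic.2 le_rfl⟩⟩

/-! ### Grassmann–Plücker functions -/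

/-- A Grassmann–Plücker function of rank `r+1` on `E` with coefficients in a
hyperfield `F`. -/
noncomputable def IsGPHyper {R E : Type*} [Fintype E] (F : Hyperfield R) (r : ℕ)
    (φ : (Fin (r + 1) → E) → R) : Prop :=
  (∃ x, φ x ≠ F.zero) ∧
  (∀ x : Fin (r + 1) → E, ∀ i j : Fin (r + 1), i ≠ j → x i = x j → φ x = F.zero) ∧
  (∀ (x : Fin (r + 1) → E) (σ : Equiv.Perm (Fin (r + 1))), Equiv.Perm.sign σ = -1 →
    φ (x ∘ σ) = F.toHyperring.neg (φ x)) ∧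
  (∀ (x : Fin (r + 2) → E) (y : Fin r → E),
    F.zero ∈ hypersum F.add F.zero
      ((List.finRange (r + 2)).map fun (k : Fin (r + 2)) =>
        if Even (k : ℕ)
        then F.toHyperring.neg (F.mul (φ (x ∘ k.succAbove)) (φ (Fin.cons (x k) y)))
        else F.mul (φ (x ∘ k.succAbove)) (φ (Fin.cons (x k) y))))

/-- A Grassmann–Plücker function of rank `r+1` on `E` with coefficients in a
fuzzy ring (given by its data `D`). -/
def IsGPFuzzy {K E : Type*} [Fintype E] (D : FuzzyData K) (r : ℕ)
    (φ : (Fin (r + 1) → E) → K) : Prop :=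
  (∀ x, D.IsUnit (φ x) ∨ φ x = D.zero) ∧
  (∃ x, φ x ≠ D.zero) ∧
  (∀ x : Fin (r + 1) → E, ∀ i j : Fin (r + 1), i ≠ j → x i = x j → φ x = D.zero) ∧
  (∀ (x : Fin (r + 1) → E) (σ : Equiv.Perm (Fin (r + 1))), Equiv.Perm.sign σ = -1 →
    φ (x ∘ σ) = D.mul D.eps (φ x)) ∧
  (∀ (x : Fin (r + 2) → E) (y : Fin r → E),
    D.sum ((List.finRange (r + 2)).map fun (k : Fin (r + 2)) =>
      if Even (k : ℕ)
      then D.mul D.eps (D.mul (φ (x ∘ k.succAbove)) (φ (Fin.cons (x k) y)))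
      else D.mul (φ (x ∘ k.succAbove)) (φ (Fin.cons (x k) y))) ∈ D.null)

/-! In `H_Γ`, adding an element `a` to a singleton or to an interval `[0, b]` again gives a
singleton or an interval: the larger side wins, and ties produce the interval below. By
induction every finite hypersum is a singleton or an interval, and conversely `{a}` and
`[0, a] = a ⊕ a` are hypersums. Intervals add to intervals because `z ∈ z ⊕ 0`. -/

lemma sAddOf_singleton_singleton {R : Type*} (add : R → R → Set R) (a b : R) :
    sAddOf add {a} {b} = add a b := by
  simp [sAddOf]

lemma sAddOf_comm {R : Type*} {add : R → R → Set R} (h : ∀ a b, add a b = add b a)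
    (X Y : Set R) : sAddOf add X Y = sAddOf add Y X := by
  unfold sAddOf
  rw [Set.iUnion₂_comm]
  simp only [h]

section Tropical

variable {Γ : Type*} [CommGroup Γ] [LinearOrder Γ] [IsOrderedMonoid Γ]

lemma tropAdd_comm (x y : WithZero Γ) : tropAdd Γ x y = tropAdd Γ y x := by
  rcases eq_or_ne x y with rfl | h
  · rfl
  · simp [tropAdd, h, h.symm, max_comm]

lemma tropAdd_self (a : WithZero Γ) : tropAdd Γ a a = Set.Iic a := if_pos rfl

lemma tropAdd_of_ne {a b : WithZero Γ} (h : a ≠ b) : tropAdd Γ a b = {max a b} := if_neg h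

lemma le_max_of_mem_tropAdd {x y z : WithZero Γ} (h : z ∈ tropAdd Γ x y) : z ≤ max x y := by
  unfold tropAdd at h
  split at h
  · exact (Set.mem_Iic.1 h).trans (le_max_left _ _)
  · exact (Set.mem_singleton_iff.1 h).le

lemma mem_tropAdd_zero (z : WithZero Γ) : z ∈ tropAdd Γ z 0 := by
  rcases eq_or_ne z 0 with rfl | h
  · exact Set.mem_Iic.2 le_rfl
  · simp [tropAdd, h]

lemma sAddOf_tropAdd_singleton_Iic_of_le {a b : WithZero Γ} (h : a ≤ b) :
    sAddOf (tropAdd Γ) {a} (Set.Iic b) = Set.Iic b := by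
  ext z
  simp only [sAddOf, Set.mem_iUnion, Set.mem_singleton_iff, Set.mem_Iic, exists_prop,
    exists_eq_left]
  constructor
  · rintro ⟨y, hy, hz⟩
    exact (le_max_of_mem_tropAdd hz).trans (max_le h hy)
  · intro hz
    rcases le_or_gt z a with hza | haz
    · exact ⟨a, h, by simpa [tropAdd] using hza⟩
    · exact ⟨z, hz, by simp [tropAdd, haz.ne, haz.le]⟩

lemma sAddOf_tropAdd_singleton_Iic_of_lt {a b : WithZero Γ} (h : b < a) :
    sAddOf (tropAdd Γ) {a} (Set.Iic b) = {a} := by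
  ext z
  simp only [sAddOf, Set.mem_iUnion, Set.mem_singleton_iff, Set.mem_Iic, exists_prop,
    exists_eq_left]
  constructor
  · rintro ⟨y, hy, hz⟩
    have hya : y < a := hy.trans_lt h
    simpa [tropAdd, hya.ne', hya.le] using hz
  · rintro rfl
    exact ⟨b, le_rfl, by simp [tropAdd, h.ne', h.le]⟩

lemma sAddOf_tropAdd_singleton_Iic (a b : WithZero Γ) :
    sAddOf (tropAdd Γ) {a} (Set.Iic b) = if a ≤ b then Set.Iic b else {a} := by
  split_ifs with h
  · exact sAddOf_tropAdd_singleton_Iic_of_le h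
  · exact sAddOf_tropAdd_singleton_Iic_of_lt (not_le.1 h)

lemma sAddOf_tropAdd_Iic_Iic (a b : WithZero Γ) :
    sAddOf (tropAdd Γ) (Set.Iic a) (Set.Iic b) = Set.Iic (max a b) := by
  ext z
  simp only [sAddOf, Set.mem_iUnion, Set.mem_Iic, exists_prop]
  constructor
  · rintro ⟨x, hx, y, hy, hz⟩
    exact (le_max_of_mem_tropAdd hz).trans (max_le_max hx hy)
  · intro hz
    rcases le_max_iff.1 hz with hza | hzb
    · exact ⟨z, hza, 0, zero_le, mem_tropAdd_zero z⟩
    · exact ⟨0, zero_le, z, hzb, tropAdd_comm z 0 ▸ mem_tropAdd_zero z⟩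

lemma sAddOf_tropAdd_singleton_mem_KgSet (x : WithZero Γ) {B : Set (WithZero Γ)}
    (hB : B ∈ KgSet Γ) : sAddOf (tropAdd Γ) {x} B ∈ KgSet Γ := by
  rcases hB with ⟨b, rfl⟩ | ⟨b, rfl⟩
  · rw [sAddOf_singleton_singleton]
    rcases eq_or_ne x b with rfl | h
    · exact Or.inr ⟨x, tropAdd_self x⟩
    · exact Or.inl ⟨max x b, tropAdd_of_ne h⟩
  · rcases le_or_gt x b with h | h
    · exact Or.inr ⟨b, sAddOf_tropAdd_singleton_Iic_of_le h⟩
    · exact Or.inl ⟨x, sAddOf_tropAdd_singleton_Iic_of_lt h⟩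

lemma sumSet_tropAdd_eq_KgSet : sumSet (tropAdd Γ) = KgSet Γ := by
  ext A
  constructor
  · rintro ⟨a, l, rfl⟩
    induction l with
    | nil => exact Or.inl ⟨a, rfl⟩
    | cons x l ih => exact sAddOf_tropAdd_singleton_mem_KgSet x ih
  · rintro (⟨a, rfl⟩ | ⟨a, rfl⟩)
    · exact ⟨a, [], rfl⟩
    · exact ⟨a, [a], by rw [List.foldr_cons, List.foldr_nil, sAddOf_singleton_singleton,
        tropAdd_self]⟩

/- The cases of `KgAdd` overlap (`{0} = [0, 0]`), so each branch is evaluated at the witnesses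
chosen by `KgAdd` itself. -/
lemma sAddOf_tropAdd_eq_KgAdd {A B : Set (WithZero Γ)} (hA : A ∈ KgSet Γ)
    (hB : B ∈ KgSet Γ) :
    sAddOf (tropAdd Γ) A B = KgAdd Γ A B := by
  unfold KgAdd
  by_cases h₁ : ∃ a b : WithZero Γ, A = {a} ∧ B = {b}
  · obtain ⟨hA₁, hB₁⟩ := h₁.choose_spec.choose_spec
    rw [dif_pos h₁, congrArg₂ (sAddOf (tropAdd Γ)) hA₁ hB₁, sAddOf_singleton_singleton,
      tropAdd]
  rw [dif_neg h₁]
  by_cases h₂ : ∃ a b : WithZero Γ, A = {a} ∧ B = Set.Iic b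
  · obtain ⟨hA₂, hB₂⟩ := h₂.choose_spec.choose_spec
    rw [dif_pos h₂, congrArg₂ (sAddOf (tropAdd Γ)) hA₂ hB₂, sAddOf_tropAdd_singleton_Iic]
  rw [dif_neg h₂]
  by_cases h₃ : ∃ a b : WithZero Γ, A = Set.Iic a ∧ B = {b}
  · obtain ⟨hA₃, hB₃⟩ := h₃.choose_spec.choose_spec
    rw [dif_pos h₃, congrArg₂ (sAddOf (tropAdd Γ)) hA₃ hB₃, sAddOf_comm tropAdd_comm,
      sAddOf_tropAdd_singleton_Iic]
  rw [dif_neg h₃]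
  have h₄ : ∃ a b : WithZero Γ, A = Set.Iic a ∧ B = Set.Iic b := by
    rcases hA with ⟨a, hA⟩ | ⟨a, hA⟩ <;> rcases hB with ⟨b, hB⟩ | ⟨b, hB⟩
    exacts [(h₁ ⟨a, b, hA, hB⟩).elim, (h₂ ⟨a, b, hA, hB⟩).elim,
      (h₃ ⟨a, b, hA, hB⟩).elim, ⟨a, b, hA, hB⟩]
  obtain ⟨hA₄, hB₄⟩ := h₄.choose_spec.choose_spec
  rw [dif_pos h₄, congrArg₂ (sAddOf (tropAdd Γ)) hA₄ hB₄, sAddOf_tropAdd_Iic_Iic]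

lemma zero_mem_iff_exists_eq_Iic {A : Set (WithZero Γ)} (hA : A ∈ KgSet Γ) :
    (0 : WithZero Γ) ∈ A ↔ ∃ a : WithZero Γ, A = Set.Iic a := by
  refine ⟨fun h0 => ?_, fun ⟨a, ha⟩ => ha ▸ Set.mem_Iic.2 zero_le⟩
  rcases hA with ⟨a, rfl⟩ | ⟨a, rfl⟩
  · obtain rfl : (0 : WithZero Γ) = a := h0
    exact ⟨0, by ext z; simp⟩
  · exact ⟨a, rfl⟩

end Tropical

/-- For a totally ordered abelian group `Γ` there is a canonical
isomorphism `𝓕̄(H_Γ) ≅ K_Γ`: the set `S(H_Γ)` of finite hypersums in `H_Γ` consists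
exactly of the singletons and the intervals `[0,a]`, the addition of `𝓕̄(H_Γ)`
satisfies the defining case formulas of the addition of `K_Γ` (and agrees with it),
the multiplications are both elementwise, `ε` is `{1}` on both sides (`-1 = 1` in
`H_Γ`), and the null elements coincide (the sets containing `0`, i.e. the
intervals). -/
theorem reduced_fuzzy_trop_eq_KGamma (Γ : Type*) [CommGroup Γ] [LinearOrder Γ] [IsOrderedMonoid Γ] :
    sumSet (tropAdd Γ) = KgSet Γ ∧
    (∀ a b : WithZero Γ, a ≠ b → sAddOf (tropAdd Γ) {a} {b} = {max a b}) ∧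
    (∀ a : WithZero Γ, sAddOf (tropAdd Γ) {a} {a} = Set.Iic a) ∧
    (∀ a b : WithZero Γ, a ≤ b → sAddOf (tropAdd Γ) {a} (Set.Iic b) = Set.Iic b) ∧
    (∀ a b : WithZero Γ, b < a → sAddOf (tropAdd Γ) {a} (Set.Iic b) = {a}) ∧
    (∀ a b : WithZero Γ,
      sAddOf (tropAdd Γ) (Set.Iic a) (Set.Iic b) = Set.Iic (max a b)) ∧
    (∀ A ∈ KgSet Γ, ∀ B ∈ KgSet Γ, sAddOf (tropAdd Γ) A B = KgAdd Γ A B) ∧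
    ((0 : WithZero Γ) ∈ tropAdd Γ 1 1) ∧
    (∀ A ∈ KgSet Γ, ((0 : WithZero Γ) ∈ A ↔ ∃ a : WithZero Γ, A = Set.Iic a)) := by
  refine ⟨sumSet_tropAdd_eq_KgSet, fun a b h => ?_, fun a => ?_,
    fun _ _ => sAddOf_tropAdd_singleton_Iic_of_le, fun _ _ => sAddOf_tropAdd_singleton_Iic_of_lt,
    sAddOf_tropAdd_Iic_Iic, fun _ hA _ hB => sAddOf_tropAdd_eq_KgAdd hA hB,
    by simp [tropAdd], fun _ => zero_mem_iff_exists_eq_Iic⟩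
  · rw [sAddOf_singleton_singleton, tropAdd_of_ne h]
  · rw [sAddOf_singleton_singleton, tropAdd_self]
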